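/- Target Score Identity for non-additive noise: suppose the conditional density has the form p_{Y|X}(y|x) = F(Φ(y, x)) where Φ : ℝ^d × ℝ^d → ℝ^d is smooth and, for every y, the map Φ(y, ·) : ℝ^d → ℝ^d is a C²-diffeomorphism with inverse Φ^{-1}(y, ·). Then for every y ∈ ℝ^d, ∇ log p_Y(y) = ∫ [ (∇₁Φ^{-1}(y, Φ(y, x)))ᵀ ∇ log p_X(x) + ∇_y log |det(∇₂Φ^{-1}(y, ·))| evaluated at Φ(y, x) ] p_{X|Y}(x|y) dx, where ∇₁ and ∇₂ denote the (Fréchet) derivatives of Φ^{-1} with respect to its first and second argument, p_Y(y) = ∫ p_X(x) F(Φ(y, x)) dx, and p_{X|Y}(x|y) = p_X(x) F(Φ(y, x)) / p_Y(y). -/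

import Mathlib

open MeasureTheory Real InnerProductSpace


section Det

variable {E : Type*} [NormedAddCommGroup E] [NormedSpace ℝ E] [FiniteDimensional ℝ E]

theorem contDiff_clm_det : ContDiff ℝ 1 fun T : E →L[ℝ] E => T.det := by
  classical
  let b := Module.finBasis ℝ E
  have key : ∀ T : E →L[ℝ] E, T.det =
      ∑ σ : Equiv.Perm (Fin (Module.finrank ℝ E)),
        ((Equiv.Perm.sign σ : ℤ) : ℝ) * ∏ i, LinearMap.toMatrix b b (↑T : E →ₗ[ℝ] E) (σ i) i := by
    intro T
    rw [ContinuousLinearMap.det, ← LinearMap.det_toMatrix b (↑T : E →ₗ[ℝ] E),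
      Matrix.det_apply']
  rw [funext key]
  apply ContDiff.sum
  intro σ _
  apply ContDiff.mul contDiff_const
  apply contDiff_prod
  intro i _
  let L : (E →L[ℝ] E) →ₗ[ℝ] ℝ :=
    { toFun := fun T => LinearMap.toMatrix b b (↑T : E →ₗ[ℝ] E) (σ i) i
      map_add' := by intro T S; simp
      map_smul' := by intro c T; simp }
  exact (LinearMap.toContinuousLinearMap L).contDiff
end Det


section Abs

variable {E : Type*} [NormedAddCommGroup E] [NormedSpace ℝ E]

theorem contDiff_abs_of_ne {u : E → ℝ} (hu : ContDiff ℝ 1 u) (h0 : ∀ p, u p ≠ 0) :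
    ContDiff ℝ 1 fun p => |u p| := by
  rw [contDiff_iff_contDiffAt]
  intro p
  rcases lt_or_gt_of_ne (h0 p) with hneg | hpos
  · have hev : (fun q => -u q) =ᶠ[nhds p] fun q => |u q| := by
      have : ∀ᶠ q in nhds p, u q < 0 :=
        (hu.continuous.continuousAt).eventually_lt continuousAt_const hneg
      filter_upwards [this] with q hq
      rw [abs_of_neg hq]
    exact ContDiffAt.congr_of_eventuallyEq (hu.contDiffAt.neg) hev.symm
  · have hev : (fun q => u q) =ᶠ[nhds p] fun q => |u q| := by
      have : ∀ᶠ q in nhds p, 0 < u q :=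
        (continuousAt_const).eventually_lt (hu.continuous.continuousAt) hpos
      filter_upwards [this] with q hq
      rw [abs_of_pos hq]
    exact ContDiffAt.congr_of_eventuallyEq hu.contDiffAt hev.symm

end Abs

section Grad

variable {E : Type*} [NormedAddCommGroup E] [InnerProductSpace ℝ E] [CompleteSpace E]
variable {F : Type*} [NormedAddCommGroup F] [InnerProductSpace ℝ F] [CompleteSpace F]

theorem toDual_smul_real (c : ℝ) (u : E) :
    toDual ℝ E (c • u) = c • toDual ℝ E u := by
  ext w; simp [inner_smul_left]

theorem toDual_add_real (u v : E) :
    toDual ℝ E (u + v) = toDual ℝ E u + toDual ℝ E v := by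
  ext w; simp [inner_add_left]

theorem hasGradientAt_comp_fderiv {f : E → ℝ} {u : E} {φ : F → E} {φ' : F →L[ℝ] E} {y : F}
    (hf : HasGradientAt f u (φ y)) (hφ : HasFDerivAt φ φ' y) :
    HasGradientAt (fun w => f (φ w)) ((ContinuousLinearMap.adjoint φ') u) y := by
  have h := (hasGradientAt_iff_hasFDerivAt.mp hf).comp y hφ
  have heq : (toDual ℝ E u).comp φ' = toDual ℝ F ((ContinuousLinearMap.adjoint φ') u) := by
    ext w
    simp [ContinuousLinearMap.adjoint_inner_left]
  rw [hasGradientAt_iff_hasFDerivAt, ← heq]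
  exact h

theorem HasGradientAt.mul' {f g : E → ℝ} {u v : E} {y : E}
    (hf : HasGradientAt f u y) (hg : HasGradientAt g v y) :
    HasGradientAt (fun w => f w * g w) (f y • v + g y • u) y := by
  have h := (hasGradientAt_iff_hasFDerivAt.mp hf).mul (hasGradientAt_iff_hasFDerivAt.mp hg)
  rw [hasGradientAt_iff_hasFDerivAt, toDual_add_real, toDual_smul_real, toDual_smul_real]
  exact h

theorem HasGradientAt.log' {f : E → ℝ} {u : E} {y : E}
    (hf : HasGradientAt f u y) (h0 : f y ≠ 0) :
    HasGradientAt (fun w => Real.log (f w)) ((f y)⁻¹ • u) y := by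
  have h := (hasGradientAt_iff_hasFDerivAt.mp hf).log h0
  rw [hasGradientAt_iff_hasFDerivAt, toDual_smul_real]
  exact h

theorem toDual_integral {α : Type*} [MeasurableSpace α] {μ : Measure α}
    {v : α → E} (hv : Integrable v μ) (hv' : Integrable (fun a => toDual ℝ E (v a)) μ) :
    toDual ℝ E (∫ a, v a ∂μ) = ∫ a, toDual ℝ E (v a) ∂μ := by
  apply ContinuousLinearMap.ext
  intro w
  rw [ContinuousLinearMap.integral_apply hv']
  simp only [toDual_apply_apply]
  rw [real_inner_comm, ← integral_inner hv w]
  exact integral_congr_ae (Filter.Eventually.of_forall fun a => real_inner_comm _ _)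

end Grad

theorem smul_alg_aux {V : Type*} [AddCommGroup V] [Module ℝ V] (a p f q : ℝ) (w Au : V)
    (ha : a ≠ 0) (hp : p ≠ 0) (hq : q ≠ 0) :
    a⁻¹ • (f • (p • w + a • Au)) = q • ((p * f / q) • (p⁻¹ • Au + a⁻¹ • w)) := by
  match_scalars <;> field_simp <;> ring

theorem integral_comp_diffeo {d : ℕ} {f finv : EuclideanSpace ℝ (Fin d) → EuclideanSpace ℝ (Fin d)}
    (hf : Differentiable ℝ f) (hli : ∀ x, finv (f x) = x) (hri : ∀ z, f (finv z) = z)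
    {Fv : Type*} [NormedAddCommGroup Fv] [NormedSpace ℝ Fv]
    (h : EuclideanSpace ℝ (Fin d) → Fv) :
    ∫ x, h x = ∫ z, |(fderiv ℝ f z).det| • h (f z) := by
  have hinj : Function.Injective f := Function.LeftInverse.injective hli
  have hsurj : Function.Surjective f := Function.RightInverse.surjective hri
  have key := MeasureTheory.integral_image_eq_integral_abs_det_fderiv_smul (volume)
    MeasurableSet.univ (fun x _ => ((hf x).hasFDerivAt).hasFDerivWithinAt) (hinj.injOn) h
  rw [Set.image_univ, hsurj.range_eq] at key
  simpa [MeasureTheory.Measure.restrict_univ] using key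

/-- **Target Score Identity for non-additive noise**: with
`p_{Y|X}(y|x) = F(Φ(y,x))` where `Φ(y,·)` is a `C²`-diffeomorphism with inverse
`Φ⁻¹(y,·) = Φinv y`, for every `y`:
`∇ log p_Y(y) = ∫ [(∇₁Φ⁻¹(y, Φ(y,x)))ᵀ ∇ log p_X(x)
  + ∇_y log |det(∇₂Φ⁻¹(y,·))| (Φ(y,x))] p_{X|Y}(x|y) dx`. -/
theorem target_score_identity_general_noise
    (d : ℕ) (hd : 1 ≤ d)
    (pX : EuclideanSpace ℝ (Fin d) → ℝ)
    (hpX_pos : ∀ x, 0 < pX x) (hpX_diff : ContDiff ℝ 1 pX)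
    (hpX_prob : ∫ x, pX x = 1)
    (F : EuclideanSpace ℝ (Fin d) → ℝ)
    (hF_pos : ∀ z, 0 < F z) (hF_cont : Continuous F)
    (Φ Φinv : EuclideanSpace ℝ (Fin d) → EuclideanSpace ℝ (Fin d) → EuclideanSpace ℝ (Fin d))
    (hΦ_smooth : ContDiff ℝ (⊤ : ℕ∞) (fun p : EuclideanSpace ℝ (Fin d) × EuclideanSpace ℝ (Fin d) =>
      Φ p.1 p.2))
    (hΦinv_C2 : ContDiff ℝ 2 (fun p : EuclideanSpace ℝ (Fin d) × EuclideanSpace ℝ (Fin d) =>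
      Φinv p.1 p.2))
    (hleft : ∀ y x, Φinv y (Φ y x) = x)
    (hright : ∀ y z, Φ y (Φinv y z) = z)
    (pY : EuclideanSpace ℝ (Fin d) → ℝ)
    (hpY : ∀ y, pY y = ∫ x, pX x * F (Φ y x))
    (pXgY : EuclideanSpace ℝ (Fin d) → EuclideanSpace ℝ (Fin d) → ℝ)
    (hpXgY : ∀ x y, pXgY x y = pX x * F (Φ y x) / pY y)
    (hInt : ∀ y, Integrable (fun x => pX x * F (Φ y x)))
    -- integrability conditions permitting the change of variables `z = Φ(y,x)` and
    -- differentiation under the integral sign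
    (hIntZ : ∀ y, Integrable (fun z =>
      pX (Φinv y z) * |(fderiv ℝ (fun z' => Φinv y z') z).det| * F z))
    (hDom : ∀ y, ∃ ε > 0, ∃ g : EuclideanSpace ℝ (Fin d) → ℝ, Integrable g ∧
      ∀ y', dist y' y < ε → ∀ z,
        ‖gradient (fun y'' =>
          pX (Φinv y'' z) * |(fderiv ℝ (fun z' => Φinv y'' z') z).det|) y'‖ * F z ≤ g z) :
    ∀ y, gradient (fun y' => Real.log (pY y')) y
      = ∫ x, pXgY x y •
          ((ContinuousLinearMap.adjoint
              (fderiv ℝ (fun y' => Φinv y' (Φ y x)) y))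
            (gradient (fun x' => Real.log (pX x')) x)
          + gradient (fun y' =>
              Real.log |(fderiv ℝ (fun z' => Φinv y' z') (Φ y x)).det|) y) := by
  classical
  intro y
  -- basic smoothness facts
  have hΦinv_c1 : ContDiff ℝ 1 (fun p : EuclideanSpace ℝ (Fin d) × EuclideanSpace ℝ (Fin d) =>
      Φinv p.1 p.2) := hΦinv_C2.of_le (by norm_num)
  have hΦinv_fst : ∀ y₀, ContDiff ℝ 1 (fun z => Φinv y₀ z) :=
    fun y₀ => hΦinv_c1.comp (contDiff_const.prodMk contDiff_id)
  have hΦinv_snd : ∀ z₀, ContDiff ℝ 1 (fun y' => Φinv y' z₀) :=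
    fun z₀ => hΦinv_c1.comp (contDiff_id.prodMk contDiff_const)
  have hΦ_c : ∀ y₀, ContDiff ℝ 1 (fun x => Φ y₀ x) :=
    fun y₀ => (hΦ_smooth.of_le (by simp)).comp (contDiff_const.prodMk contDiff_id)
  -- the partial derivative in the second variable, jointly C¹
  have hD : ContDiff ℝ 1 (fun p : EuclideanSpace ℝ (Fin d) × EuclideanSpace ℝ (Fin d) =>
      fderiv ℝ (fun z' => Φinv p.1 z') p.2) := by
    apply ContDiff.fderiv
      (f := fun (p : EuclideanSpace ℝ (Fin d) × EuclideanSpace ℝ (Fin d)) z => Φinv p.1 z)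
      (g := fun p => p.2) (m := 2)
    · exact hΦinv_C2.comp ((contDiff_fst.comp contDiff_fst).prodMk contDiff_snd)
    · exact contDiff_snd
    · norm_num
  -- chain rule : A ∘ B = id
  have hAB : ∀ y₀ x, (fderiv ℝ (fun z' => Φinv y₀ z') (Φ y₀ x)).comp
      (fderiv ℝ (fun x' => Φ y₀ x') x) = ContinuousLinearMap.id ℝ _ := by
    intro y₀ x
    have h1 : HasFDerivAt (fun x' => Φinv y₀ (Φ y₀ x'))
        ((fderiv ℝ (fun z' => Φinv y₀ z') (Φ y₀ x)).comp (fderiv ℝ (fun x' => Φ y₀ x') x)) x :=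
      (((hΦinv_fst y₀).differentiable one_ne_zero _).hasFDerivAt).comp x
        (((hΦ_c y₀).differentiable one_ne_zero x).hasFDerivAt)
    have h2 : HasFDerivAt (fun x' : EuclideanSpace ℝ (Fin d) => x')
        (ContinuousLinearMap.id ℝ (EuclideanSpace ℝ (Fin d))) x := hasFDerivAt_id x
    have heq : (fun x' => Φinv y₀ (Φ y₀ x')) = fun x' : EuclideanSpace ℝ (Fin d) => x' :=
      funext (hleft y₀)
    rw [heq] at h1
    exact h1.unique h2
  have hdet1 : ∀ y₀ x, (fderiv ℝ (fun z' => Φinv y₀ z') (Φ y₀ x)).det *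
      (fderiv ℝ (fun x' => Φ y₀ x') x).det = 1 := by
    intro y₀ x
    have := congrArg ContinuousLinearMap.det (hAB y₀ x)
    simp only [ContinuousLinearMap.det, ContinuousLinearMap.coe_comp,
      ContinuousLinearMap.coe_id, LinearMap.det_comp, LinearMap.det_id] at this
    have h' : LinearMap.det ((fderiv ℝ (fun z' => Φinv y₀ z') (Φ y₀ x) :
        EuclideanSpace ℝ (Fin d) →ₗ[ℝ] EuclideanSpace ℝ (Fin d)).comp
        (fderiv ℝ (fun x' => Φ y₀ x') x :
        EuclideanSpace ℝ (Fin d) →ₗ[ℝ] EuclideanSpace ℝ (Fin d))) = 1 := by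
      rw [← ContinuousLinearMap.toLinearMap_comp]; exact this
    rw [LinearMap.det_comp] at h'
    exact h'
  have hdet_ne : ∀ y₀ z, (fderiv ℝ (fun z' => Φinv y₀ z') z).det ≠ 0 := by
    intro y₀ z
    have := hdet1 y₀ (Φinv y₀ z)
    rw [hright y₀ z] at this
    exact left_ne_zero_of_mul_eq_one this
  have habs : ∀ x, |(fderiv ℝ (fun x' => Φ y x') x).det| =
      |(fderiv ℝ (fun z' => Φinv y z') (Φ y x)).det|⁻¹ := by
    intro x
    have h := hdet1 y x
    have habs1 : |(fderiv ℝ (fun z' => Φinv y z') (Φ y x)).det| *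
        |(fderiv ℝ (fun x' => Φ y x') x).det| = 1 := by
      rw [← abs_mul, h, abs_one]
    exact eq_inv_of_mul_eq_one_left (by rw [mul_comm] at habs1; exact habs1)
  -- joint C¹ of the density factor
  have hGfull : ContDiff ℝ 1 (fun p : EuclideanSpace ℝ (Fin d) × EuclideanSpace ℝ (Fin d) =>
      pX (Φinv p.1 p.2) * |(fderiv ℝ (fun z' => Φinv p.1 z') p.2).det|) := by
    exact (hpX_diff.comp hΦinv_c1).mul
      (contDiff_abs_of_ne (contDiff_clm_det.comp hD) (fun p => hdet_ne p.1 p.2))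
  set v : EuclideanSpace ℝ (Fin d) → EuclideanSpace ℝ (Fin d) → EuclideanSpace ℝ (Fin d) :=
    fun y' z => gradient (fun y'' =>
      pX (Φinv y'' z) * |(fderiv ℝ (fun z' => Φinv y'' z') z).det|) y' with hvdef
  have hvgrad : ∀ (y' z : EuclideanSpace ℝ (Fin d)), HasGradientAt (fun y'' =>
      pX (Φinv y'' z) * |(fderiv ℝ (fun z' => Φinv y'' z') z).det|) (v y' z) y' := by
    intro y' z
    have hdiff : DifferentiableAt ℝ (fun y'' =>
        pX (Φinv y'' z) * |(fderiv ℝ (fun z' => Φinv y'' z') z).det|) y' := by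
      have : ContDiff ℝ 1 (fun y'' =>
          pX (Φinv y'' z) * |(fderiv ℝ (fun z' => Φinv y'' z') z).det|) :=
        hGfull.comp (contDiff_id.prodMk contDiff_const)
      exact (this.differentiable one_ne_zero) y'
    exact hdiff.hasGradientAt
  have hvcont : Continuous (fun z => v y z) := by
    have hfd : ∀ z, fderiv ℝ (fun y'' =>
        pX (Φinv y'' z) * |(fderiv ℝ (fun z' => Φinv y'' z') z).det|) y
        = (fderiv ℝ (fun p : EuclideanSpace ℝ (Fin d) × EuclideanSpace ℝ (Fin d) =>
            pX (Φinv p.1 p.2) * |(fderiv ℝ (fun z' => Φinv p.1 z') p.2).det|) (y, z)).comp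
          (ContinuousLinearMap.inl ℝ (EuclideanSpace ℝ (Fin d)) (EuclideanSpace ℝ (Fin d))) := by
      intro z
      have h := ((hGfull.differentiable one_ne_zero) (y, z)).hasFDerivAt.comp y
        (hasFDerivAt_prodMk_left (𝕜 := ℝ) y z)
      exact h.fderiv
    have : (fun z => v y z) = fun z => (toDual ℝ (EuclideanSpace ℝ (Fin d))).symm
        ((fderiv ℝ (fun p : EuclideanSpace ℝ (Fin d) × EuclideanSpace ℝ (Fin d) =>
            pX (Φinv p.1 p.2) * |(fderiv ℝ (fun z' => Φinv p.1 z') p.2).det|) (y, z)).comp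
          (ContinuousLinearMap.inl ℝ (EuclideanSpace ℝ (Fin d)) (EuclideanSpace ℝ (Fin d)))) := by
      funext z
      rw [hvdef]
      show gradient _ y = _
      rw [gradient, hfd z]
    rw [this]
    apply Continuous.comp (LinearIsometryEquiv.continuous _)
    apply Continuous.clm_comp _ continuous_const
    exact (hGfull.continuous_fderiv one_ne_zero).comp (Continuous.prodMk_right y)
  -- change of variables
  have h1 : ∀ y₀, pY y₀ = ∫ z,
      pX (Φinv y₀ z) * |(fderiv ℝ (fun z' => Φinv y₀ z') z).det| * F z := by
    intro y₀
    rw [hpY y₀, integral_comp_diffeo ((hΦinv_fst y₀).differentiable one_ne_zero)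
      (hright y₀) (hleft y₀) (fun x => pX x * F (Φ y₀ x))]
    congr 1
    funext z
    rw [hright y₀ z, smul_eq_mul]
    ring
  obtain ⟨ε, hε, g, hg_int, hg⟩ := hDom y
  have hnorm : ∀ (y' z : EuclideanSpace ℝ (Fin d)),
      ‖F z • toDual ℝ (EuclideanSpace ℝ (Fin d)) (v y' z)‖ = ‖v y' z‖ * F z := by
    intro y' z
    rw [norm_smul, Real.norm_eq_abs, abs_of_pos (hF_pos z), LinearIsometryEquiv.norm_map,
      mul_comm]
  have hderiv : HasFDerivAt pY
      (∫ z, F z • toDual ℝ (EuclideanSpace ℝ (Fin d)) (v y z)) y := by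
    have hpYfun : pY = fun y' => ∫ z,
        pX (Φinv y' z) * |(fderiv ℝ (fun z' => Φinv y' z') z).det| * F z := funext h1
    rw [hpYfun]
    apply hasFDerivAt_integral_of_dominated_of_fderiv_le
      (F' := fun y' z => F z • toDual ℝ (EuclideanSpace ℝ (Fin d)) (v y' z))
      (bound := g) (Metric.ball_mem_nhds y hε)
    · apply Filter.Eventually.of_forall
      intro y'
      exact ((hGfull.continuous.comp (Continuous.prodMk_right y')).mul hF_cont).aestronglyMeasurable
    · exact hIntZ y
    · exact (hF_cont.smul ((toDual ℝ (EuclideanSpace ℝ (Fin d))).continuous.comp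
        hvcont)).aestronglyMeasurable
    · apply Filter.Eventually.of_forall
      intro z y' hy'
      rw [hnorm y' z]
      exact hg y' (Metric.mem_ball.mp hy') z
    · exact hg_int
    · apply Filter.Eventually.of_forall
      intro z y' _
      exact ((hvgrad y' z).hasFDerivAt).mul_const (F z)
  have hvbound : ∀ z, ‖F z • v y z‖ ≤ g z := by
    intro z
    rw [norm_smul, Real.norm_eq_abs, abs_of_pos (hF_pos z), mul_comm]
    exact hg y (by simpa using hε) z
  have hc1 : Continuous fun z => F z • v y z := hF_cont.smul hvcont
  have hc2 : Continuous fun z => F z • toDual ℝ (EuclideanSpace ℝ (Fin d)) (v y z) :=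
    hF_cont.smul ((toDual ℝ (EuclideanSpace ℝ (Fin d))).continuous.comp hvcont)
  have hInt_v : Integrable (fun z => F z • v y z) := by
    apply Integrable.mono' hg_int hc1.aestronglyMeasurable
    exact Filter.Eventually.of_forall hvbound
  have hInt_dv : Integrable (fun z => F z • toDual ℝ (EuclideanSpace ℝ (Fin d)) (v y z)) := by
    apply Integrable.mono' hg_int hc2.aestronglyMeasurable
    apply Filter.Eventually.of_forall
    intro z
    rw [hnorm y z]
    exact hg y (by simpa using hε) z
  have h3 : HasGradientAt pY (∫ z, F z • v y z) y := by
    rw [hasGradientAt_iff_hasFDerivAt]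
    have heq : toDual ℝ (EuclideanSpace ℝ (Fin d)) (∫ z, F z • v y z)
        = ∫ z, F z • toDual ℝ (EuclideanSpace ℝ (Fin d)) (v y z) := by
      rw [toDual_integral hInt_v (by
        simpa only [toDual_smul_real] using hInt_dv)]
      exact integral_congr_ae (Filter.Eventually.of_forall fun z => toDual_smul_real _ _)
    rw [heq]
    exact hderiv
  have h4 : 0 < pY y := by
    rw [hpY y]
    have hpos : ∀ x, 0 < pX x * F (Φ y x) :=
      fun x => mul_pos (hpX_pos x) (hF_pos (Φ y x))
    rw [integral_pos_iff_support_of_nonneg (fun x => (hpos x).le) (hInt y)]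
    have : Function.support (fun x => pX x * F (Φ y x)) = Set.univ := by
      ext x
      simp only [Function.support, Set.mem_setOf_eq, Set.mem_univ, iff_true, mul_eq_zero,
        not_or]
      exact (hpos x).ne'
    rw [this]
    exact isOpen_univ.measure_pos volume ⟨0, trivial⟩
  have h5 : HasGradientAt (fun y' => Real.log (pY y')) ((pY y)⁻¹ • ∫ z, F z • v y z) y :=
    h3.log' h4.ne'
  have h6 : ∫ z, F z • v y z = ∫ x, |(fderiv ℝ (fun x' => Φ y x') x).det| •
      (F (Φ y x) • v y (Φ y x)) :=
    integral_comp_diffeo ((hΦ_c y).differentiable one_ne_zero) (hleft y) (hright y) _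
  have h7 : ∀ x, |(fderiv ℝ (fun x' => Φ y x') x).det| • (F (Φ y x) • v y (Φ y x))
      = pY y • (pXgY x y •
          ((ContinuousLinearMap.adjoint
              (fderiv ℝ (fun y' => Φinv y' (Φ y x)) y))
            (gradient (fun x' => Real.log (pX x')) x)
          + gradient (fun y' =>
              Real.log |(fderiv ℝ (fun z' => Φinv y' z') (Φ y x)).det|) y)) := by
    intro x
    have hpXgrad : HasGradientAt pX (gradient pX x) x :=
      ((hpX_diff.differentiable one_ne_zero) x).hasGradientAt
    have hφ : HasFDerivAt (fun y' => Φinv y' (Φ y x))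
        (fderiv ℝ (fun y' => Φinv y' (Φ y x)) y) y :=
      (((hΦinv_snd (Φ y x)).differentiable one_ne_zero) y).hasFDerivAt
    have sub1 : HasGradientAt (fun y' => pX (Φinv y' (Φ y x)))
        ((ContinuousLinearMap.adjoint (fderiv ℝ (fun y' => Φinv y' (Φ y x)) y))
          (gradient pX x)) y := by
      apply hasGradientAt_comp_fderiv _ hφ
      rw [hleft y x]; exact hpXgrad
    have habsC1 : ContDiff ℝ 1 (fun y' => |(fderiv ℝ (fun z' => Φinv y' z') (Φ y x)).det|) :=
      (contDiff_abs_of_ne (contDiff_clm_det.comp hD) (fun p => hdet_ne p.1 p.2)).comp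
        (contDiff_id.prodMk contDiff_const)
    have sub2 : HasGradientAt (fun y' => |(fderiv ℝ (fun z' => Φinv y' z') (Φ y x)).det|)
        (gradient (fun y' => |(fderiv ℝ (fun z' => Φinv y' z') (Φ y x)).det|) y) y :=
      ((habsC1.differentiable one_ne_zero) y).hasGradientAt
    have sub3 := sub1.mul' sub2
    have hveq : v y (Φ y x) = pX (Φinv y (Φ y x)) •
          gradient (fun y' => |(fderiv ℝ (fun z' => Φinv y' z') (Φ y x)).det|) y
        + |(fderiv ℝ (fun z' => Φinv y z') (Φ y x)).det| •
          ((ContinuousLinearMap.adjoint (fderiv ℝ (fun y' => Φinv y' (Φ y x)) y))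
            (gradient pX x)) :=
      (hvgrad y (Φ y x)).unique sub3
    rw [hleft y x] at hveq
    have hlog_pX : gradient (fun x' => Real.log (pX x')) x = (pX x)⁻¹ • gradient pX x :=
      (hpXgrad.log' (hpX_pos x).ne').gradient
    have hlog_det : gradient
        (fun y' => Real.log |(fderiv ℝ (fun z' => Φinv y' z') (Φ y x)).det|) y
        = |(fderiv ℝ (fun z' => Φinv y z') (Φ y x)).det|⁻¹ •
          gradient (fun y' => |(fderiv ℝ (fun z' => Φinv y' z') (Φ y x)).det|) y :=
      (sub2.log' (abs_ne_zero.mpr (hdet_ne y (Φ y x)))).gradient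
    rw [habs x, hveq, hlog_pX, hlog_det, hpXgY, _root_.map_smul]
    have hαne : |(fderiv ℝ (fun z' => Φinv y z') (Φ y x)).det| ≠ 0 :=
      abs_ne_zero.mpr (hdet_ne y (Φ y x))
    exact smul_alg_aux _ _ _ _ _ _ hαne (hpX_pos x).ne' h4.ne'
  rw [h5.gradient, h6]
  calc (pY y)⁻¹ • ∫ x, |(fderiv ℝ (fun x' => Φ y x') x).det| • (F (Φ y x) • v y (Φ y x))
      = (pY y)⁻¹ • ∫ x, pY y • (pXgY x y •
          ((ContinuousLinearMap.adjoint (fderiv ℝ (fun y' => Φinv y' (Φ y x)) y))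
            (gradient (fun x' => Real.log (pX x')) x)
          + gradient (fun y' =>
              Real.log |(fderiv ℝ (fun z' => Φinv y' z') (Φ y x)).det|) y)) := by
        rw [funext h7]
    _ = _ := by
        rw [integral_smul, smul_smul, inv_mul_cancel₀ h4.ne', one_smul]
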